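/- arXiv:hep-th/9206057 — 2 statements merged into one kernel-verified Lean document; each statement's English description precedes it below -/
import Mathlib

section
/- For complex parameters α, β and a nonnegative integer n, ∑_{k=0}^{n} [α+n-k choose n-k]_q [β+k choose k]_q q^{-k(α+β+2)} = [α+β+n+1 choose n]_q q^{-n(1+β)}. -/
/-!
Induction on `n`. Write `T n k` (`convTerm`) for the `k`-th summand and `S n` for the sum.
Both `S n` and the right-hand side satisfy `[n+1] X (n+1) = [α+β+n+2] q^{-(1+β)} X n`; for the
right-hand side this is the absorption identity `[m+1] [x choose m+1] = [x] [x-1 choose m]`.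
For `S` it holds termwise up to a telescoping sum,
`[n+1] T (n+1) k - [α+β+n+2] q^{-(1+β)} T n k = H k - H (k+1)`, `H j = q^{j-n-1} [j] T (n+1) j`,
and after absorption in both binomials this becomes an identity between `q`-integers that
follows from `[x+y] = q^y [x] + q^{-x} [y]`.
-/

open Finset

/-- `q^x` for complex exponent, via `exp (x log q)`. -/
noncomputable def Qp (q x : ℂ) : ℂ := Complex.exp (x * Complex.log q)

/-- q-integer `[x]_q = (q^x - q^{-x})/(q - q⁻¹)`. -/
noncomputable def qint (q x : ℂ) : ℂ := (Qp q x - Qp q (-x)) / (q - q⁻¹)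

/-- q-factorial `[n]_q! = ∏_{k=1}^n [k]_q`. -/
noncomputable def qfact (q : ℂ) (n : ℕ) : ℂ := ∏ k ∈ Finset.Icc 1 n, qint q (k : ℂ)

/-- q-binomial coefficient for natural arguments, `[m]!/([m-k]![k]!)`. -/
noncomputable def qchoose (q : ℂ) (m k : ℕ) : ℂ := qfact q m / (qfact q (m - k) * qfact q k)

/-- falling q-factorial `[α; k]! = ∏_{j=0}^{k-1} [α-j]_q`. -/
noncomputable def qfall (q α : ℂ) (k : ℕ) : ℂ := ∏ j ∈ Finset.range k, qint q (α - (j : ℂ))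

/-- generalized q-binomial `[α choose k]_q = [α;k]!/[k]!`. -/
noncomputable def qbinom (q α : ℂ) (k : ℕ) : ℂ := qfall q α k / qfact q k

lemma Qp_zero (q : ℂ) : Qp q 0 = 1 := by simp [Qp]

lemma Qp_add (q x y : ℂ) : Qp q (x + y) = Qp q x * Qp q y := by
  rw [Qp, Qp, Qp, add_mul, Complex.exp_add]

lemma qint_zero (q : ℂ) : qint q 0 = 0 := by simp [qint]

lemma qint_add (q x y : ℂ) : qint q (x + y) = Qp q y * qint q x + Qp q (-x) * qint q y := by
  simp only [qint, mul_div_assoc', ← add_div, mul_sub, ← Qp_add]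
  ring_nf

lemma qfall_succ (q x : ℂ) (m : ℕ) : qfall q x (m + 1) = qint q x * qfall q (x - 1) m := by
  simp only [qfall, prod_range_succ', Nat.cast_zero, sub_zero, Nat.cast_succ,
    sub_add_eq_sub_sub_swap]
  ring

lemma qfact_succ (q : ℂ) (m : ℕ) : qfact q (m + 1) = qfact q m * qint q ((m : ℂ) + 1) := by
  rw [qfact, prod_Icc_succ_top (Nat.le_add_left 1 m), Nat.cast_succ, qfact]

lemma qbinom_succ_mul_qint (q x : ℂ) (m : ℕ) (hm : qint q ((m : ℂ) + 1) ≠ 0) :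
    qbinom q x (m + 1) * qint q ((m : ℂ) + 1) = qint q x * qbinom q (x - 1) m := by
  rw [qbinom, qbinom, qfall_succ, qfact_succ]
  field_simp

/- Both sides equal `q^κ [μ-κ+1] [α+μ+1-κ]`, by `qint_add` applied to `μ + 1 = (μ-κ+1) + κ` and to
`α+β+μ+2 = (α+μ+1-κ) + (β+κ+1)`. -/
lemma qint_telescope_identity (q α β μ κ : ℂ) :
    qint q (μ + 1) * qint q (α + μ + 1 - κ)
        - qint q (α + β + μ + 2) * Qp q (-(1 + β)) * qint q (μ - κ + 1)
      = Qp q (κ - μ - 1) * qint q κ * qint q (α + μ + 1 - κ)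
        - Qp q (κ - μ) * qint q (β + κ + 1) * Qp q (-(α + β + 2)) * qint q (μ - κ + 1) := by
  rw [show μ + 1 = (μ - κ + 1) + κ by ring,
    show α + β + μ + 2 = (α + μ + 1 - κ) + (β + κ + 1) by ring,
    qint_add q (μ - κ + 1) κ, qint_add q (α + μ + 1 - κ) (β + κ + 1)]
  have h₁ : Qp q (-(μ - κ + 1)) = Qp q (κ - μ - 1) := by congr 1; ring
  have h₂ : Qp q (β + κ + 1) * Qp q (-(1 + β)) = Qp q κ := by rw [← Qp_add]; congr 1; ring
  have h₃ : Qp q (-(α + μ + 1 - κ)) * Qp q (-(1 + β)) = Qp q (κ - μ) * Qp q (-(α + β + 2)) := by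
    rw [← Qp_add, ← Qp_add]; congr 1; ring
  linear_combination qint q κ * qint q (α + μ + 1 - κ) * h₁
    - qint q (α + μ + 1 - κ) * qint q (μ - κ + 1) * h₂
    - qint q (β + κ + 1) * qint q (μ - κ + 1) * h₃

noncomputable def convTerm (q α β : ℂ) (n k : ℕ) : ℂ :=
  qbinom q (α + n - k) (n - k) * qbinom q (β + k) k * Qp q (-(k * (α + β + 2)))

lemma convTerm_succ_mul_qint (q α β : ℂ) {n k : ℕ} (hk : k ≤ n)
    (h : qint q ((n : ℂ) - k + 1) ≠ 0) :
    convTerm q α β (n + 1) k * qint q ((n : ℂ) - k + 1)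
      = qint q (α + n + 1 - k) * convTerm q α β n k := by
  have hcast : ((n - k : ℕ) : ℂ) = n - k := Nat.cast_sub hk
  have habs := qbinom_succ_mul_qint q (α + n + 1 - k) (n - k) (by rwa [hcast])
  rw [hcast, show α + n + 1 - k - 1 = α + n - k by ring] at habs
  rw [convTerm, convTerm, show n + 1 - k = n - k + 1 by omega, Nat.cast_succ,
    show α + (n + 1) - k = α + n + 1 - k by ring]
  linear_combination qbinom q (β + k) k * Qp q (-(k * (α + β + 2))) * habs

lemma convTerm_succ_succ_mul_qint (q α β : ℂ) (n k : ℕ) (h : qint q ((k : ℂ) + 1) ≠ 0) :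
    convTerm q α β (n + 1) (k + 1) * qint q ((k : ℂ) + 1)
      = qint q (β + k + 1) * Qp q (-(α + β + 2)) * convTerm q α β n k := by
  have habs := qbinom_succ_mul_qint q (β + k + 1) k h
  rw [show β + k + 1 - 1 = β + k by ring] at habs
  rw [convTerm, convTerm, Nat.add_sub_add_right, Nat.cast_succ, Nat.cast_succ,
    show α + (n + 1) - (k + 1) = α + n - k by ring, show β + (k + 1) = β + k + 1 by ring,
    show -((k + 1) * (α + β + 2)) = -(k * (α + β + 2)) + -(α + β + 2) by ring, Qp_add]
  linear_combination qbinom q (α + n - k) (n - k) * Qp q (-(k * (α + β + 2)))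
    * Qp q (-(α + β + 2)) * habs

lemma convTerm_telescope (q α β : ℂ) {n k : ℕ} (hk : k ≤ n)
    (h₁ : qint q ((n : ℂ) - k + 1) ≠ 0) (h₂ : qint q ((k : ℂ) + 1) ≠ 0) :
    qint q ((n : ℂ) + 1) * convTerm q α β (n + 1) k
        - qint q (α + β + n + 2) * Qp q (-(1 + β)) * convTerm q α β n k
      = Qp q ((k : ℂ) - n - 1) * qint q k * convTerm q α β (n + 1) k
        - Qp q (((k + 1 : ℕ) : ℂ) - n - 1) * qint q ((k + 1 : ℕ) : ℂ)
          * convTerm q α β (n + 1) (k + 1) := by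
  have hL := convTerm_succ_mul_qint q α β hk h₁
  have hR := convTerm_succ_succ_mul_qint q α β n k h₂
  have hbracket := qint_telescope_identity q α β n k
  rw [Nat.cast_succ, show (k : ℂ) + 1 - n - 1 = k - n by ring]
  apply mul_left_cancel₀ h₁
  linear_combination (qint q ((n : ℂ) + 1) - Qp q ((k : ℂ) - n - 1) * qint q k) * hL
    + qint q ((n : ℂ) - k + 1) * Qp q ((k : ℂ) - n) * hR + convTerm q α β n k * hbracket

lemma qint_mul_sum_convTerm_succ (q α β : ℂ) (n : ℕ)
    (hgen : ∀ k : ℕ, 1 ≤ k → qint q (k : ℂ) ≠ 0) :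
    qint q ((n : ℂ) + 1) * ∑ k ∈ range (n + 1 + 1), convTerm q α β (n + 1) k
      = qint q (α + β + n + 2) * Qp q (-(1 + β)) * ∑ k ∈ range (n + 1), convTerm q α β n k := by
  set H : ℕ → ℂ := fun j ↦ Qp q ((j : ℂ) - n - 1) * qint q j * convTerm q α β (n + 1) j
  have htel : ∑ k ∈ range (n + 1), (qint q ((n : ℂ) + 1) * convTerm q α β (n + 1) k
      - qint q (α + β + n + 2) * Qp q (-(1 + β)) * convTerm q α β n k) = H 0 - H (n + 1) := by
    rw [← sum_range_sub']
    refine sum_congr rfl fun k hk ↦ ?_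
    have hk : k ≤ n := Nat.lt_succ_iff.mp (mem_range.mp hk)
    have h₁ := hgen (n - k + 1) (by omega)
    have h₂ := hgen (k + 1) (by omega)
    push_cast [Nat.cast_sub hk] at h₁ h₂
    exact convTerm_telescope q α β hk h₁ h₂
  have hH₀ : H 0 = 0 := by simp [H, qint_zero]
  have hH : H (n + 1) = qint q ((n : ℂ) + 1) * convTerm q α β (n + 1) (n + 1) := by
    simp only [H, Nat.cast_succ, add_sub_cancel_left, sub_self, Qp_zero, one_mul]
  rw [sum_sub_distrib, ← mul_sum, ← mul_sum, hH₀, hH] at htel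
  rw [sum_range_succ, mul_add]
  linear_combination htel

theorem qbinom_convolution_general (q α β : ℂ) (n : ℕ)
    (hgen : ∀ k : ℕ, 1 ≤ k → qint q (k : ℂ) ≠ 0) :
    ∑ k ∈ Finset.range (n + 1),
        qbinom q (α + (n : ℂ) - (k : ℂ)) (n - k) * qbinom q (β + (k : ℂ)) k *
          Qp q (-((k : ℂ) * (α + β + 2))) =
      qbinom q (α + β + (n : ℂ) + 1) n * Qp q (-((n : ℂ) * (1 + β))) := by
  induction n with
  | zero => simp [qbinom, qfall, qfact, Qp]
  | succ n ih =>
    have hn : qint q ((n : ℂ) + 1) ≠ 0 := by exact_mod_cast hgen (n + 1) (by omega)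
    have habs := qbinom_succ_mul_qint q (α + β + n + 2) n hn
    rw [show α + β + n + 2 - 1 = α + β + n + 1 by ring] at habs
    apply mul_left_cancel₀ hn
    calc qint q ((n : ℂ) + 1) * ∑ k ∈ range (n + 1 + 1), convTerm q α β (n + 1) k
        = qint q (α + β + n + 2) * Qp q (-(1 + β)) * ∑ k ∈ range (n + 1), convTerm q α β n k :=
          qint_mul_sum_convTerm_succ q α β n hgen
      _ = qint q (α + β + n + 2) * Qp q (-(1 + β))
          * (qbinom q (α + β + n + 1) n * Qp q (-(n * (1 + β)))) := congrArg _ ih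
      _ = _ := by
        rw [Nat.cast_succ, show α + β + (n + 1) + 1 = α + β + n + 2 by ring,
          show -((n + 1) * (1 + β)) = -(n * (1 + β)) + -(1 + β) by ring, Qp_add]
        linear_combination -Qp q (-(n * (1 + β))) * Qp q (-(1 + β)) * habs

theorem qbinom_convolution (q α β : ℂ) (n : ℕ) (hq : q ≠ 0) (hq2 : q ^ 2 ≠ 1)
    (hgen : ∀ k : ℕ, 1 ≤ k → qint q (k : ℂ) ≠ 0) :
    ∑ k ∈ Finset.range (n + 1),
        qbinom q (α + (n : ℂ) - (k : ℂ)) (n - k) * qbinom q (β + (k : ℂ)) k *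
          Qp q (-((k : ℂ) * (α + β + 2))) =
      qbinom q (α + β + (n : ℂ) + 1) n * Qp q (-((n : ℂ) * (1 + β))) :=
  qbinom_convolution_general q α β n hgen
end

section
/- The N-dimensional color representation closes: for ε with ε^{2N} = 1, ε² a primitive N-th root of unity, and p ∈ ℂ, the operators on the N-dimensional space with basis e_0,…,e_{N−1} defined by (X⁺)^a_b = ([2p−a]_ε[a+1]_ε)^{1/2} δ_{a+1,b} (with (X⁺)^{N−1}_N-term absent since [N]_ε = 0), (X⁻)^a_b = ([2p−a+1]_ε[a]_ε)^{1/2} δ_{a−1,b}, and K e_a = ε^{2p−2a} e_a, satisfy K X^± K^{−1} = ε^{±2} X^± and [X⁺, X⁻] = (K − K^{−1})/(ε − ε^{−1}). -/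
open Finset

lemma Qp_neg (q x : ℂ) : Qp q (-x) = (Qp q x)⁻¹ := by
  simp [Qp, ← Complex.exp_neg, neg_mul]

lemma Qp_sub (q x y : ℂ) : Qp q (x - y) = Qp q x / Qp q y := by
  rw [sub_eq_add_neg, Qp_add, Qp_neg, div_eq_mul_inv]

lemma Qp_natCast {q : ℂ} (hq : q ≠ 0) (n : ℕ) : Qp q n = q ^ n := by
  simp [Qp, Complex.exp_nat_mul, Complex.exp_log hq]

lemma Qp_ne_zero (q x : ℂ) : Qp q x ≠ 0 := Complex.exp_ne_zero _

lemma qint_natCast_eq_zero_of_pow_eq_one {q : ℂ} {n : ℕ} (hq : q ^ (2 * n) = 1) :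
    qint q n = 0 := by
  rcases eq_or_ne n 0 with rfl | hn
  · exact_mod_cast qint_zero q
  have hq0 : q ≠ 0 := by rintro rfl; simp [hn] at hq
  have hinv : (q ^ n)⁻¹ = q ^ n := inv_eq_of_mul_eq_one_right (by rw [← pow_add, ← two_mul, hq])
  rw [qint, Qp_neg, Qp_natCast hq0, hinv, sub_self, zero_div]

-- No hypothesis on `q` is needed: if `q - q⁻¹ = 0`, every q-integer is `0` (division by zero).
lemma qint_mul_qint_add_one_sub (q P a : ℂ) :
    qint q (P - a) * qint q (a + 1) - qint q (P - a + 1) * qint q a = qint q (P - 2 * a) := by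
  rcases eq_or_ne (q - q⁻¹) 0 with hqq | hqq
  · simp [qint, hqq]
  have hq : q ≠ 0 := by rintro rfl; simp at hqq
  have hQ1 : Qp q 1 = q := by simp [Qp, Complex.exp_log hq]
  have hq2 : q ^ 2 - 1 ≠ 0 := by
    contrapose! hqq
    field_simp
    linear_combination hqq
  simp only [qint, Qp_neg, Qp_add, Qp_sub, hQ1, show P - 2 * a = P - a - a by ring]
  have hP := Qp_ne_zero q P
  have ha := Qp_ne_zero q a
  field_simp
  ring

namespace Matrix

variable {n R : Type*} [Fintype n] [DecidableEq n] [Field R]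

lemma inv_diagonal_of_ne_zero {k : n → R} (hk : ∀ a, k a ≠ 0) :
    (diagonal k)⁻¹ = diagonal fun a => (k a)⁻¹ := by
  refine inv_eq_right_inv ?_
  rw [diagonal_mul_diagonal, ← diagonal_one]
  congr with a
  exact mul_inv_cancel₀ (hk a)

lemma diagonal_mul_mul_inv_diagonal_apply {k : n → R} (hk : ∀ a, k a ≠ 0) (M : Matrix n n R)
    (a b : n) : (diagonal k * M * (diagonal k)⁻¹) a b = k a / k b * M a b := by
  rw [inv_diagonal_of_ne_zero hk, mul_diagonal, diagonal_mul]
  ring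

lemma diagonal_mul_mul_inv_diagonal_eq_smul {k : n → R} (hk : ∀ a, k a ≠ 0) {M : Matrix n n R}
    {c : R} (h : ∀ a b, M a b ≠ 0 → k a / k b = c) : diagonal k * M * (diagonal k)⁻¹ = c • M := by
  ext a b
  rw [diagonal_mul_mul_inv_diagonal_apply hk, smul_apply, smul_eq_mul]
  by_cases hM : M a b = 0
  · simp [hM]
  · rw [h a b hM]

lemma smul_diagonal_sub_inv_diagonal {k : n → R} (hk : ∀ a, k a ≠ 0) (c : R) :
    c • (diagonal k - (diagonal k)⁻¹) = diagonal fun a => c * (k a - (k a)⁻¹) := by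
  rw [inv_diagonal_of_ne_zero hk, diagonal_sub, ← diagonal_smul]
  rfl

end Matrix

section Ladder

variable {R : Type*} [CommSemiring R] (N : ℕ) (d : ℕ → R)

def raisingMatrix : Matrix (Fin N) (Fin N) R :=
  Matrix.of fun a b => if (b : ℕ) = (a : ℕ) + 1 then d a else 0

def loweringMatrix : Matrix (Fin N) (Fin N) R :=
  Matrix.of fun a b => if (a : ℕ) = (b : ℕ) + 1 then d b else 0

lemma raisingMatrix_mul_loweringMatrix :
    raisingMatrix N d * loweringMatrix N d =
      Matrix.diagonal fun a : Fin N => if (a : ℕ) + 1 < N then d a ^ 2 else 0 := by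
  ext a b
  simp only [raisingMatrix, loweringMatrix, Matrix.mul_apply, Matrix.of_apply,
    Matrix.diagonal_apply]
  rw [Fin.sum_univ_eq_sum_range (fun c => (if c = (a : ℕ) + 1 then d a else 0) *
    (if c = (b : ℕ) + 1 then d b else 0))]
  simp only [ite_mul, zero_mul, Finset.sum_ite_eq', Finset.mem_range, Fin.ext_iff]
  split_ifs <;> simp_all [sq]

lemma loweringMatrix_mul_raisingMatrix :
    loweringMatrix N d * raisingMatrix N d =
      Matrix.diagonal fun a : Fin N => if (a : ℕ) = 0 then 0 else d (a - 1) ^ 2 := by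
  ext a b
  simp only [raisingMatrix, loweringMatrix, Matrix.mul_apply, Matrix.of_apply,
    Matrix.diagonal_apply]
  rw [Fin.sum_univ_eq_sum_range (fun c => (if (a : ℕ) = c + 1 then d c else 0) *
    (if (b : ℕ) = c + 1 then d c else 0))]
  rcases ha : (a : ℕ) with _ | a'
  · simp
  · simp only [Nat.add_right_cancel_iff, ite_mul, zero_mul, Finset.sum_ite_eq, Finset.mem_range]
    simp only [if_pos (show a' < N by omega), Fin.ext_iff, ha]
    by_cases hb : (b : ℕ) = a' + 1 <;> simp [hb, eq_comm, sq]

end Ladder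

section Conjugation

variable {R : Type*} [Field R] {N : ℕ} (d : ℕ → R) {k : Fin N → R} {c : R}

lemma diagonal_mul_raisingMatrix_mul_inv_diagonal (hk : ∀ a, k a ≠ 0)
    (h : ∀ a b : Fin N, (b : ℕ) = a + 1 → k a / k b = c) :
    Matrix.diagonal k * raisingMatrix N d * (Matrix.diagonal k)⁻¹ = c • raisingMatrix N d :=
  Matrix.diagonal_mul_mul_inv_diagonal_eq_smul hk fun a b hab =>
    h a b (ite_ne_right_iff.mp hab).1

lemma diagonal_mul_loweringMatrix_mul_inv_diagonal (hk : ∀ a, k a ≠ 0)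
    (h : ∀ a b : Fin N, (a : ℕ) = b + 1 → k a / k b = c) :
    Matrix.diagonal k * loweringMatrix N d * (Matrix.diagonal k)⁻¹ = c • loweringMatrix N d :=
  Matrix.diagonal_mul_mul_inv_diagonal_eq_smul hk fun a b hab =>
    h a b (ite_ne_right_iff.mp hab).1

end Conjugation

lemma ladder_commutator_entry {q P : ℂ} {N : ℕ} (hq : q ^ (2 * N) = 1) {d : ℕ → ℂ}
    (hd : ∀ a : ℕ, d a ^ 2 = qint q (P - a) * qint q (a + 1)) {a : ℕ} (ha : a < N) :
    (if a + 1 < N then d a ^ 2 else 0) - (if a = 0 then 0 else d (a - 1) ^ 2) =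
      qint q (P - 2 * a) := by
  have hraise : (if a + 1 < N then d a ^ 2 else 0) = qint q (P - a) * qint q (a + 1) := by
    split_ifs with h
    · exact hd a
    · rw [show (a : ℂ) + 1 = (N : ℕ) by norm_cast; omega, qint_natCast_eq_zero_of_pow_eq_one hq,
        mul_zero]
  have hlower : (if a = 0 then 0 else d (a - 1) ^ 2) = qint q (P - a + 1) * qint q a := by
    split_ifs with h
    · rw [h, Nat.cast_zero, qint_zero, mul_zero]
    · rw [hd, Nat.cast_pred (by omega)]
      ring_nf
  rw [hraise, hlower, qint_mul_qint_add_one_sub]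

theorem finite_color_rep_relations_general (N : ℕ) (hN : 2 ≤ N) (ε p : ℂ) (hε : ε ^ (2 * N) = 1)
    (d : ℕ → ℂ)
    (hd : ∀ a : ℕ, (d a) ^ 2 = qint ε (2 * p - (a : ℂ)) * qint ε ((a : ℂ) + 1)) :
    let Xp : Matrix (Fin N) (Fin N) ℂ :=
      Matrix.of fun a b => if (b : ℕ) = (a : ℕ) + 1 then d (a : ℕ) else 0
    let Xm : Matrix (Fin N) (Fin N) ℂ :=
      Matrix.of fun a b => if (a : ℕ) = (b : ℕ) + 1 then d (b : ℕ) else 0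
    let K : Matrix (Fin N) (Fin N) ℂ :=
      Matrix.diagonal fun a => Qp ε (2 * p - 2 * ((a : ℕ) : ℂ))
    K * Xp * K⁻¹ = (ε ^ 2) • Xp ∧
    K * Xm * K⁻¹ = (ε ^ 2)⁻¹ • Xm ∧
    Xp * Xm - Xm * Xp = (ε - ε⁻¹)⁻¹ • (K - K⁻¹) := by
  intro Xp Xm K
  have hXp : Xp = raisingMatrix N d := rfl
  have hXm : Xm = loweringMatrix N d := rfl
  have hε0 : ε ≠ 0 := by
    rintro rfl
    simp [show N ≠ 0 by omega] at hε
  have hk : ∀ a : Fin N, Qp ε (2 * p - 2 * ((a : ℕ) : ℂ)) ≠ 0 := fun _ => Qp_ne_zero _ _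
  have hstep : ∀ a b : ℕ, b = a + 1 →
      Qp ε (2 * p - 2 * (a : ℂ)) / Qp ε (2 * p - 2 * (b : ℂ)) = ε ^ 2 := by
    rintro a b rfl
    rw [← Qp_sub, ← Qp_natCast hε0 2]
    push_cast
    ring_nf
  refine ⟨diagonal_mul_raisingMatrix_mul_inv_diagonal d hk fun a b h => hstep a b h,
    diagonal_mul_loweringMatrix_mul_inv_diagonal d hk fun a b h => ?_, ?_⟩
  · rw [← hstep b a h, inv_div]
  · rw [hXp, hXm, raisingMatrix_mul_loweringMatrix, loweringMatrix_mul_raisingMatrix,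
      Matrix.diagonal_sub, Matrix.smul_diagonal_sub_inv_diagonal hk]
    congr with a
    rw [ladder_commutator_entry hε hd a.isLt, qint, Qp_neg, div_eq_inv_mul]

theorem finite_color_rep_relations (N : ℕ) (hN : 2 ≤ N) (ε p : ℂ) (hε : ε ^ (2 * N) = 1)
    (hprim : IsPrimitiveRoot (ε ^ 2) N) (d : ℕ → ℂ)
    (hd : ∀ a : ℕ, (d a) ^ 2 = qint ε (2 * p - (a : ℂ)) * qint ε ((a : ℂ) + 1)) :
    let Xp : Matrix (Fin N) (Fin N) ℂ :=
      Matrix.of fun a b => if (b : ℕ) = (a : ℕ) + 1 then d (a : ℕ) else 0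
    let Xm : Matrix (Fin N) (Fin N) ℂ :=
      Matrix.of fun a b => if (a : ℕ) = (b : ℕ) + 1 then d (b : ℕ) else 0
    let K : Matrix (Fin N) (Fin N) ℂ :=
      Matrix.diagonal fun a => Qp ε (2 * p - 2 * ((a : ℕ) : ℂ))
    K * Xp * K⁻¹ = (ε ^ 2) • Xp ∧
    K * Xm * K⁻¹ = (ε ^ 2)⁻¹ • Xm ∧
    Xp * Xm - Xm * Xp = (ε - ε⁻¹)⁻¹ • (K - K⁻¹) :=
  finite_color_rep_relations_general N hN ε p hε d hd
end
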